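/- For α = 1/2, the explosion coefficient f_n = a_n^2 / v_n satisfies n (log n) · f_n → 1 as n → ∞. -/

import Mathlib

/-!
Wallis' product gives `(Γ(n) / Γ(n + 1/2))² ~ 1/n`, hence `a_n² ~ π / (4n)`. Comparing `a_k²`
termwise with `π / (4k)`, the partial sums satisfy `v_n ~ (π/4) H_n ~ (π/4) log n`, so that
`n log n f_n = n a_n² / (v_n / log n) → 1`.
-/

open Filter Finset Real Topology Asymptotics

lemma sum_Icc_one_eq_sum_range {M : Type*} [AddCommMonoid M] (b : ℕ → M) (n : ℕ) :
    ∑ k ∈ Icc 1 n, b k = ∑ i ∈ range n, b (i + 1) := by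
  rw [← Ico_add_one_right_eq_Icc, sum_Ico_eq_sum_range]
  simp [add_comm]

lemma tendsto_harmonic_div_log :
    Tendsto (fun n : ℕ => (harmonic n : ℝ) / log n) atTop (𝓝 1) := by
  have hlog := tendsto_log_atTop.comp tendsto_natCast_atTop_atTop
  have := (tendsto_harmonic_sub_log.div_atTop hlog).add_const 1
  rw [zero_add] at this
  refine this.congr' ?_
  filter_upwards [eventually_gt_atTop 1] with n hn
  have : log n ≠ 0 := (log_pos (by exact_mod_cast hn)).ne'
  simp only [Function.comp_apply]
  field_simp
  ring

lemma tendsto_sum_Icc_div_log_of_tendsto_natCast_mul {b : ℕ → ℝ} {c : ℝ}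
    (h : Tendsto (fun n : ℕ => n * b n) atTop (𝓝 c)) :
    Tendsto (fun n : ℕ => (∑ k ∈ Icc 1 n, b k) / log n) atTop (𝓝 c) := by
  have hH : ∀ n, (harmonic n : ℝ) = ∑ i ∈ range n, ((i + 1 : ℕ) : ℝ)⁻¹ := by
    simp [harmonic]
  have hH_top : Tendsto (fun n => ∑ i ∈ range n, ((i + 1 : ℕ) : ℝ)⁻¹) atTop atTop := by
    simpa [hH] using
      tendsto_harmonic_sub_log.add_atTop (tendsto_log_atTop.comp tendsto_natCast_atTop_atTop)
  have hlo : (fun i : ℕ => b (i + 1) - c * ((i + 1 : ℕ) : ℝ)⁻¹) =o[atTop]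
      fun i => ((i + 1 : ℕ) : ℝ)⁻¹ := by
    rw [isLittleO_iff_tendsto fun i hi => absurd hi (by positivity)]
    have := ((tendsto_add_atTop_iff_nat 1).2 h).sub_const c
    rw [sub_self] at this
    refine this.congr fun i => ?_
    field_simp
  have hdiv : Tendsto (fun n => (∑ i ∈ range n, b (i + 1)) / harmonic n) atTop (𝓝 c) := by
    have := (hlo.sum_range (fun i => by positivity) hH_top).tendsto_div_nhds_zero.add_const c
    rw [zero_add] at this
    refine this.congr' ?_
    filter_upwards [eventually_ne_atTop 0] with n hn
    have : (harmonic n : ℝ) ≠ 0 := by exact_mod_cast (harmonic_pos hn).ne'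
    rw [sum_sub_distrib, ← mul_sum, ← hH]
    field_simp
    ring
  have := hdiv.mul tendsto_harmonic_div_log
  rw [mul_one] at this
  refine this.congr' ?_
  filter_upwards [eventually_ne_atTop 0] with n hn
  have : (harmonic n : ℝ) ≠ 0 := by exact_mod_cast (harmonic_pos hn).ne'
  rw [sum_Icc_one_eq_sum_range, div_mul_div_cancel₀ this]

lemma Gamma_three_halves_sq : Gamma (3 / 2) ^ 2 = π / 4 := by
  rw [show (3 / 2 : ℝ) = 1 / 2 + 1 by norm_num, Gamma_add_one one_half_pos.ne', Gamma_one_half_eq,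
    mul_pow, sq_sqrt pi_pos.le]
  ring

lemma Gamma_div_Gamma_add_half_sq (m : ℕ) :
    (Gamma (m + 1) / Gamma (m + 1 + 1 / 2)) ^ 2 = 4 / π * Wallis.W m / (2 * m + 1) := by
  induction m with
  | zero =>
    rw [Nat.cast_zero, zero_add, Gamma_one, div_pow, show (1 : ℝ) + 1 / 2 = 3 / 2 by norm_num,
      Gamma_three_halves_sq]
    simp [Wallis.W]
  | succ m ih =>
    have h1 : (m : ℝ) + 1 ≠ 0 := by positivity
    have h2 : (m : ℝ) + 1 + 1 / 2 ≠ 0 := by positivity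
    rw [Nat.cast_succ, Gamma_add_one h1, add_right_comm, Gamma_add_one h2, Wallis.W_succ,
      mul_div_mul_comm, mul_pow, ih]
    field_simp
    ring

lemma tendsto_natCast_mul_Gamma_div_Gamma_add_half_sq :
    Tendsto (fun n : ℕ => n * (Gamma n / Gamma (n + 1 / 2)) ^ 2) atTop (𝓝 1) := by
  rw [← tendsto_add_atTop_iff_nat 1]
  have hW := Wallis.tendsto_W_nhds_pi_div_two.const_mul (4 / π)
  have hfrac := tendsto_add_mul_div_add_mul_atTop_nhds (𝕜 := ℝ) 1 1 1 two_ne_zero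
  have := hW.mul hfrac
  rw [show 4 / π * (π / 2) * (1 / 2) = 1 by field_simp; ring] at this
  refine this.congr fun m => ?_
  push_cast
  rw [Gamma_div_Gamma_add_half_sq]
  ring

/-- For `α = 1/2`, the explosion coefficient `f_n = a_n²/v_n` satisfies
`n (log n) f_n → 1`. -/
theorem stmt_11 (a v f : ℕ → ℝ)
    (ha : ∀ n, a n = Real.Gamma n * Real.Gamma (3 / 2) / Real.Gamma ((n : ℝ) + 1 / 2))
    (hv : ∀ n, v n = ∑ k ∈ Finset.Icc 1 n, a k ^ 2)
    (hf : ∀ n, f n = a n ^ 2 / v n) :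
    Tendsto (fun n : ℕ => (n : ℝ) * Real.log n * f n) atTop (nhds 1) := by
  have ha_sq : Tendsto (fun n : ℕ => n * a n ^ 2) atTop (𝓝 (π / 4)) := by
    rw [← Gamma_three_halves_sq, ← one_mul (Gamma (3 / 2) ^ 2)]
    refine (tendsto_natCast_mul_Gamma_div_Gamma_add_half_sq.mul_const _).congr fun n => ?_
    rw [ha]
    ring
  have hv_log : Tendsto (fun n : ℕ => v n / log n) atTop (𝓝 (π / 4)) := by
    simpa only [hv] using tendsto_sum_Icc_div_log_of_tendsto_natCast_mul ha_sq
  have := ha_sq.div hv_log (by positivity)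
  rw [div_self (by positivity)] at this
  refine this.congr fun n => ?_
  rw [Pi.div_apply, hf, div_div_eq_mul_div]
  ring
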